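/- Let α, β, γ, δ > 0 with max{α,β} ≤ min{γ,δ}. Let T₋ : ℤⁿ×ℤⁿ → ℤⁿ be translation equivariant and monotone in the sense of Knothe, and suppose its complementing operation T₊(x,y) = x+y−T₋(x,y) is also monotone in the sense of Knothe with respect to the same decomposition and orderings. Then for any finitely supported probability measures μ and ν on ℤⁿ there exists a coupling π of μ and ν such that, with κ₋ = π∘T₋⁻¹ and κ₊ = π∘T₊⁻¹ the push-forwards of π by T₋ and T₊, one has α·H(μ|mₙ) + β·H(ν|mₙ) ≥ γ·H(κ₋|mₙ) + δ·H(κ₊|mₙ). -/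

import Mathlib

open scoped BigOperators ENNReal NNReal

/-- A *total additive ordering* on an abelian group `G`: a linear order (given as
a relation `r`, meaning `r a b ↔ a ⪯ b`) compatible with addition. -/
def TotalAdditiveOrdering {G : Type*} [AddCommGroup G] (r : G → G → Prop) : Prop :=
  (∀ a, r a a) ∧ (∀ a b, r a b → r b a → a = b) ∧
  (∀ a b c, r a b → r b c → r a c) ∧ (∀ a b, r a b ∨ r b a) ∧
  (∀ a b c, r a b → r (a + c) (b + c))

/-- `u` is the minimal positive element of the ordering `r`, i.e. the minimum of
`{g : 0 ≺ g}`. -/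
def IsMinimalPositive {G : Type*} [AddCommGroup G] (r : G → G → Prop) (u : G) : Prop :=
  (r 0 u ∧ u ≠ 0) ∧ ∀ g, r 0 g → g ≠ 0 → r u g

/-- `T` is translation equivariant: `T (x+z) (y+z) = T x y + z`. -/
def TranslationEquivariant {G : Type*} [AddCommGroup G] (T : G → G → G) : Prop :=
  ∀ x y z, T (x + z) (y + z) = T x y + z

/-- `T : ℤⁿ × ℤⁿ → ℤⁿ` is triangular and monotone with respect to the decomposition
`ℤⁿ = G₁ × ⋯ × G_k` (encoded by the additive equivalence `e`, with `Gᵢ = ℤ^(ℓ i)`) and the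
orderings `ord i` on the blocks: (i) the `i`-th block of `T x y` depends only on the blocks
`≤ i` of `x` and `y`; (ii) fixing the blocks `< i`, the `i`-th block of `T` is nondecreasing
in the `i`-th blocks of both arguments. -/
def KnotheWith {n k : ℕ} (ℓ : Fin k → ℕ)
    (e : (Fin n → ℤ) ≃+ ((i : Fin k) → Fin (ℓ i) → ℤ))
    (ord : (i : Fin k) → (Fin (ℓ i) → ℤ) → (Fin (ℓ i) → ℤ) → Prop)
    (T : (Fin n → ℤ) → (Fin n → ℤ) → (Fin n → ℤ)) : Prop :=
  (∀ (i : Fin k) (x y x' y' : Fin n → ℤ),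
      (∀ j, j ≤ i → e x j = e x' j ∧ e y j = e y' j) →
      e (T x y) i = e (T x' y') i) ∧
  (∀ (i : Fin k) (x y x' y' : Fin n → ℤ),
      (∀ j, j < i → e x j = e x' j ∧ e y j = e y' j) →
      ord i (e x i) (e x' i) → ord i (e y i) (e y' i) →
      ord i (e (T x y) i) (e (T x' y') i))

/-- `T` is monotone in the sense of Knothe: there is a decomposition
`ℤⁿ = G₁ × ⋯ × G_k` with `Gᵢ = ℤ^(ℓᵢ)`, `ℓ₁ + ⋯ + ℓ_k = n`, together with total additive
orderings on the `Gᵢ`, each admitting a minimal positive element, with respect to which `T`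
is triangular and monotone. -/
def KnotheMonotone {n : ℕ} (T : (Fin n → ℤ) → (Fin n → ℤ) → (Fin n → ℤ)) : Prop :=
  ∃ (k : ℕ) (_ : 1 ≤ k) (ℓ : Fin k → ℕ) (_ : ∑ i, ℓ i = n)
    (e : (Fin n → ℤ) ≃+ ((i : Fin k) → Fin (ℓ i) → ℤ))
    (ord : (i : Fin k) → (Fin (ℓ i) → ℤ) → (Fin (ℓ i) → ℤ) → Prop),
    (∀ i, TotalAdditiveOrdering (ord i) ∧ ∃ u, IsMinimalPositive (ord i) u) ∧
    KnotheWith ℓ e ord T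

/-- `T` and `T'` are both monotone in the sense of Knothe with respect to the *same*
decomposition and orderings. -/
def KnothePair {n : ℕ} (T T' : (Fin n → ℤ) → (Fin n → ℤ) → (Fin n → ℤ)) : Prop :=
  ∃ (k : ℕ) (_ : 1 ≤ k) (ℓ : Fin k → ℕ) (_ : ∑ i, ℓ i = n)
    (e : (Fin n → ℤ) ≃+ ((i : Fin k) → Fin (ℓ i) → ℤ))
    (ord : (i : Fin k) → (Fin (ℓ i) → ℤ) → (Fin (ℓ i) → ℤ) → Prop),
    (∀ i, TotalAdditiveOrdering (ord i) ∧ ∃ u, IsMinimalPositive (ord i) u) ∧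
    KnotheWith ℓ e ord T ∧ KnotheWith ℓ e ord T'

/-- A finitely supported probability measure on `A`, viewed as its density. -/
def IsPMF {A : Type*} (μ : A → ℝ) : Prop :=
  (∀ x, 0 ≤ μ x) ∧ (Function.support μ).Finite ∧ ∑ᶠ x, μ x = 1

/-- Relative entropy `H(μ | m)` of a finitely supported probability measure with respect to
the counting measure `m`: `∑ₓ μ(x) log μ(x)` (note `Real.log 0 = 0`, so `0 · log 0 = 0`). -/
noncomputable def relEntropy {A : Type*} (μ : A → ℝ) : ℝ :=
  ∑ᶠ x, μ x * Real.log (μ x)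

/-- Push-forward `π ∘ T⁻¹` of a (finitely supported) measure `π` by the map `T`. -/
noncomputable def pushforward {A B : Type*} (T : A → B) (π : A → ℝ) : B → ℝ :=
  fun z => ∑ᶠ p ∈ {p : A | T p = z}, π p

/-- `π` is a coupling of `μ` and `ν`: a probability measure on the product whose first and
second marginals are `μ` and `ν` respectively. -/
def IsCoupling {A B : Type*} (π : A × B → ℝ) (μ : A → ℝ) (ν : B → ℝ) : Prop :=
  IsPMF π ∧ (∀ x, ∑ᶠ y, π (x, y) = μ x) ∧ (∀ y, ∑ᶠ x, π (x, y) = ν y)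

/-!
All entropies are nonpositive and `max α β ≤ min γ δ`, so it suffices to find a coupling with
`H(κ₋) + H(κ₊) ≤ H(μ) + H(ν)`. Knothe's coupling does this, block by block. The chain rule writes
`H(μ)` as the entropy of the first-block marginal plus the average entropy of the conditionals,
and the law of `T±` is a mixture, over the first-block coupling, of the laws of `T±` under the
conditional couplings, so convexity of `x log x` bounds `H(κ±)` by the same decomposition.

On a single block, a totally ordered group with a minimal positive element, the comonotone
(quantile) coupling works. Its support is a chain; along it the fibres of `T₋` and of `T₊` are
intervals, a fibre of `T₋` and one of `T₊` share at most one point, and strict monotonicity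
(from the minimal positive element and translation equivariance) puts each fibre in a row or a
column. Adding the support points in increasing order, the new point starts a new fibre of `T₋`
or of `T₊`, and since `m ↦ (w + m) log (w + m) - m log m` is increasing, the entropy increments
of `κ±` are dominated by those of the marginals.
-/

open Finset Function

section FinitelySupported

variable {A B : Type*}

theorem relEntropy_eq_sum {μ : A → ℝ} {s : Finset A} (hs : ∀ x ∉ s, μ x = 0) :
    relEntropy μ = ∑ x ∈ s, μ x * Real.log (μ x) :=
  finsum_eq_sum_of_support_subset _ fun x hx => by_contra fun h => hx (by simp [hs x h])

theorem IsPMF.exists_finset {μ : A → ℝ} (hμ : IsPMF μ) :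
    ∃ s : Finset A, (∀ x ∉ s, μ x = 0) ∧ ∀ x ∈ s, μ x ≠ 0 :=
  ⟨hμ.2.1.toFinset, fun x hx => by simpa using hx, fun x hx => by simpa using hx⟩

theorem exists_finset_of_forall_isPMF {ι : Type*} (c : Finset ι) {ρ : ι → A → ℝ}
    (hρ : ∀ i ∈ c, IsPMF (ρ i)) : ∃ t : Finset A, ∀ i ∈ c, ∀ x ∉ t, ρ i x = 0 :=
  ⟨(c.finite_toSet.biUnion fun i hi => (hρ i hi).2.1).toFinset, fun i hi x hx =>
    by_contra fun h => hx (by simpa using ⟨i, hi, h⟩)⟩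

theorem relEntropy_nonpos {μ : A → ℝ} (hμ : IsPMF μ) : relEntropy μ ≤ 0 := by
  obtain ⟨h0, hfin, h1⟩ := hμ
  refine finsum_induction (· ≤ 0) le_rfl (fun _ _ => add_nonpos) fun x => ?_
  exact Real.mul_log_nonpos (h0 x) (h1 ▸ single_le_finsum x hfin h0)

def fiberMass {ι Z : Type*} [DecidableEq Z] (c : Finset ι) (w : ι → ℝ) (f : ι → Z) (z : Z) : ℝ :=
  ∑ i ∈ c with f i = z, w i

theorem fiberMass_eq_zero_of_notMem_image {ι Z : Type*} [DecidableEq Z] {c : Finset ι}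
    {w : ι → ℝ} {f : ι → Z} {z : Z} (hz : z ∉ c.image f) : fiberMass c w f z = 0 :=
  sum_eq_zero fun i hi => absurd (mem_image.2 ⟨i, (mem_filter.1 hi).1, (mem_filter.1 hi).2⟩) hz

theorem pushforward_eq_fiberMass [DecidableEq B] {π : A → ℝ} {c : Finset A}
    (hc : ∀ p ∉ c, π p = 0) (f : A → B) : pushforward f π = fiberMass c π f := by
  funext z
  refine finsum_mem_eq_sum_of_inter_support_eq _ (Set.ext fun p => ?_)
  by_cases hp : p ∈ c <;> simp [hp, hc p]

theorem finsum_pushforward_mul {π : A → ℝ} (hπ : (support π).Finite) (f : A → B) (g : B → ℝ) :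
    ∑ᶠ z, pushforward f π z * g z = ∑ᶠ p, π p * g (f p) := by
  classical
  obtain ⟨c, hc⟩ : ∃ c : Finset A, ∀ p ∉ c, π p = 0 := ⟨hπ.toFinset, fun p hp => by simpa using hp⟩
  rw [pushforward_eq_fiberMass hc,
    finsum_eq_sum_of_support_subset (s := c.image f) _ fun z hz => by_contra fun h => hz (by
      simp [fiberMass_eq_zero_of_notMem_image h]),
    finsum_eq_sum_of_support_subset (s := c) _ fun p hp => by_contra fun h => hp (by simp [hc p h])]
  rw [← sum_fiberwise_of_maps_to (fun p hp => mem_image_of_mem f hp)]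
  refine sum_congr rfl fun z _ => ?_
  rw [fiberMass, sum_mul]
  exact sum_congr rfl fun p hp => by rw [(mem_filter.1 hp).2]

theorem IsPMF.map {π : A → ℝ} (hπ : IsPMF π) (f : A → B) : IsPMF (pushforward f π) := by
  classical
  obtain ⟨c, hc, -⟩ := hπ.exists_finset
  refine ⟨fun z => ?_, ?_, ?_⟩
  · rw [pushforward_eq_fiberMass hc]
    exact sum_nonneg fun p _ => hπ.1 p
  · refine (c.image f).finite_toSet.subset fun z hz => by_contra fun h => hz ?_
    rw [pushforward_eq_fiberMass hc, fiberMass_eq_zero_of_notMem_image h]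
  · simpa [hπ.2.2] using finsum_pushforward_mul hπ.2.1 f 1

theorem IsPMF.of_pushforward {π : A → ℝ} (h0 : ∀ p, 0 ≤ π p) (hfin : (support π).Finite)
    {f : A → B} (h : IsPMF (pushforward f π)) : IsPMF π :=
  ⟨h0, hfin, by simpa [h.2.2] using (finsum_pushforward_mul hfin f 1).symm⟩

theorem le_pushforward {π : A → ℝ} (hπ : IsPMF π) (f : A → B) (p : A) :
    π p ≤ pushforward f π (f p) := by
  classical
  obtain ⟨c, hc, -⟩ := hπ.exists_finset
  rw [pushforward_eq_fiberMass hc]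
  by_cases hp : p ∈ c
  · exact single_le_sum (fun q _ => hπ.1 q) (mem_filter.2 ⟨hp, rfl⟩)
  · rw [hc p hp]
    exact sum_nonneg fun q _ => hπ.1 q

end FinitelySupported

section Transport

variable {A B C D A' B' C' D' : Type*}

theorem relEntropy_comp_equiv (e : A ≃ B) (μ : B → ℝ) : relEntropy (μ ∘ e) = relEntropy μ :=
  finsum_comp_equiv e (f := fun x => μ x * Real.log (μ x))

theorem IsPMF.comp_equiv {μ : B → ℝ} (hμ : IsPMF μ) (e : A ≃ B) : IsPMF (μ ∘ e) :=
  ⟨fun a => hμ.1 (e a), hμ.2.1.preimage e.injective.injOn,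
    (finsum_comp_equiv e).trans hμ.2.2⟩

theorem pushforward_comp_equiv (e : A ≃ B) (f : B → C) (π : A → ℝ) :
    pushforward f (π ∘ e.symm) = pushforward (f ∘ e) π := by
  funext z
  simp only [pushforward, finsum_mem_def]
  rw [← finsum_comp_equiv e]
  congr! 1 with a
  simp [Set.indicator]

theorem pushforward_equiv_comp (h : B ≃ C) (f : A → B) (π : A → ℝ) :
    pushforward (h ∘ f) π = pushforward f π ∘ h.symm := by
  funext z
  simp only [pushforward, comp_apply, ← Equiv.eq_symm_apply]

theorem relEntropy_pushforward_equiv_comp (h : B ≃ C) (f : A → B) (π : A → ℝ) :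
    relEntropy (pushforward (h ∘ f) π) = relEntropy (pushforward f π) := by
  rw [pushforward_equiv_comp, relEntropy_comp_equiv]

theorem pushforward_fst_apply (π : A × B → ℝ) (x : A) :
    pushforward Prod.fst π x = ∑ᶠ y, π (x, y) := by
  rw [← finsum_mem_range (Prod.mk_right_injective x)]
  exact congrArg (fun s => ∑ᶠ p ∈ s, π p) (Set.ext fun p => by simp [Prod.ext_iff, eq_comm])

theorem pushforward_snd_apply (π : A × B → ℝ) (y : B) :
    pushforward Prod.snd π y = ∑ᶠ x, π (x, y) := by
  rw [← finsum_mem_range (Prod.mk_left_injective y)]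
  exact congrArg (fun s => ∑ᶠ p ∈ s, π p) (Set.ext fun p => by simp [Prod.ext_iff, eq_comm])

theorem isCoupling_iff {π : A × B → ℝ} {μ : A → ℝ} {ν : B → ℝ} :
    IsCoupling π μ ν ↔ IsPMF π ∧ pushforward Prod.fst π = μ ∧ pushforward Prod.snd π = ν := by
  simp [IsCoupling, funext_iff, pushforward_fst_apply, pushforward_snd_apply]

def HasEntropyCoupling (F : A → B → C) (G : A → B → D) (μ : A → ℝ) (ν : B → ℝ) : Prop :=
  ∃ π : A × B → ℝ, IsCoupling π μ ν ∧
    relEntropy (pushforward (fun p => F p.1 p.2) π) +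
      relEntropy (pushforward (fun p => G p.1 p.2) π) ≤ relEntropy μ + relEntropy ν

theorem HasEntropyCoupling.of_equiv (e : A' ≃ A) (e' : B' ≃ B) (h : C ≃ C') (h' : D ≃ D')
    {F : A → B → C} {G : A → B → D} {μ : A → ℝ} {ν : B → ℝ}
    (H : HasEntropyCoupling (fun a b => h (F (e a) (e' b))) (fun a b => h' (G (e a) (e' b)))
      (μ ∘ e) (ν ∘ e')) :
    HasEntropyCoupling F G μ ν := by
  obtain ⟨π, hπ, hH⟩ := H
  obtain ⟨hπ, hπ₁, hπ₂⟩ := isCoupling_iff.1 hπ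
  refine ⟨π ∘ (e.prodCongr e').symm, isCoupling_iff.2 ⟨hπ.comp_equiv _, ?_, ?_⟩, ?_⟩
  · rw [pushforward_comp_equiv]
    change pushforward (e ∘ Prod.fst) π = μ
    rw [pushforward_equiv_comp, hπ₁]
    exact funext fun a => by simp
  · rw [pushforward_comp_equiv]
    change pushforward (e' ∘ Prod.snd) π = ν
    rw [pushforward_equiv_comp, hπ₂]
    exact funext fun b => by simp
  · rw [pushforward_comp_equiv, pushforward_comp_equiv, ← relEntropy_comp_equiv e μ,
      ← relEntropy_comp_equiv e' ν, ← relEntropy_pushforward_equiv_comp h,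
      ← relEntropy_pushforward_equiv_comp h']
    exact hH

end Transport

theorem relEntropy_update {ι : Type*} [DecidableEq ι] {g : ι → ℝ} {s : Finset ι}
    (hs : ∀ x ∉ s, g x = 0) (z : ι) (v : ℝ) :
    relEntropy (update g z v) = relEntropy g + (v * Real.log v - g z * Real.log (g z)) := by
  have hs' : ∀ x ∉ insert z s, g x = 0 := fun x hx => hs x fun h => hx (mem_insert_of_mem h)
  have hne : ∀ x ∉ insert z s, x ≠ z := fun x hx h => hx (h ▸ mem_insert_self z s)
  rw [relEntropy_eq_sum (s := insert z s) fun x hx => by rw [update_of_ne (hne x hx), hs' x hx],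
    relEntropy_eq_sum hs', ← add_sum_erase _ _ (mem_insert_self z s),
    ← add_sum_erase (insert z s) _ (mem_insert_self z s), update_self,
    sum_congr rfl fun x hx => by rw [update_of_ne (ne_of_mem_erase hx)]]
  ring

section FiberMass

variable {ι Z : Type*} [DecidableEq Z]

theorem fiberMass_insert [DecidableEq ι] {c : Finset ι} {a : ι} (ha : a ∉ c) (w : ι → ℝ)
    (f : ι → Z) :
    fiberMass (insert a c) w f = update (fiberMass c w f) (f a) (w a + fiberMass c w f (f a)) := by
  funext z
  rcases eq_or_ne z (f a) with rfl | hz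
  · simp [fiberMass, filter_insert, ha]
  · simp [fiberMass, filter_insert, hz, Ne.symm hz]

theorem relEntropy_fiberMass_insert [DecidableEq ι] {c : Finset ι} {a : ι} (ha : a ∉ c)
    (w : ι → ℝ) (f : ι → Z) :
    relEntropy (fiberMass (insert a c) w f) = relEntropy (fiberMass c w f) +
      ((w a + fiberMass c w f (f a)) * Real.log (w a + fiberMass c w f (f a)) -
        fiberMass c w f (f a) * Real.log (fiberMass c w f (f a))) := by
  rw [fiberMass_insert ha,
    relEntropy_update (s := c.image f) fun _ hz => fiberMass_eq_zero_of_notMem_image hz]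

theorem fiberMass_nonneg {c : Finset ι} {w : ι → ℝ} (hw : ∀ i ∈ c, 0 ≤ w i) (f : ι → Z) (z : Z) :
    0 ≤ fiberMass c w f z :=
  sum_nonneg fun i hi => hw i (mem_filter.1 hi).1

theorem fiberMass_le_fiberMass {Z' : Type*} [DecidableEq Z'] {c : Finset ι} {w : ι → ℝ}
    (hw : ∀ i ∈ c, 0 ≤ w i) {f : ι → Z} {g : ι → Z'} {z : Z} {z' : Z'}
    (h : ∀ i ∈ c, f i = z → g i = z') : fiberMass c w f z ≤ fiberMass c w g z' :=
  sum_le_sum_of_subset_of_nonneg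
    (fun i hi => mem_filter.2 ⟨(mem_filter.1 hi).1, h i (mem_filter.1 hi).1 (mem_filter.1 hi).2⟩)
    fun i hi _ => hw i (mem_filter.1 hi).1

end FiberMass

theorem monotoneOn_mul_log_add_sub {d : ℝ} (hd : 0 ≤ d) :
    MonotoneOn (fun m => (d + m) * Real.log (d + m) - m * Real.log m) (Set.Ici 0) := by
  intro x hx y hy hxy
  rcases hd.eq_or_lt with rfl | hd
  · simp
  have hx' : (0 : ℝ) ≤ x := hx
  have hy' : (0 : ℝ) ≤ y := hy
  have hmem : ∀ {u v : ℝ}, 0 ≤ u → u ≠ v → u ∈ Set.Ici (0 : ℝ) \ {v} :=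
    fun hu huv => ⟨hu, huv⟩
  have h₁ := Real.convexOn_mul_log.slope_mono hx (hmem (by linarith) (by linarith))
    (hmem (by linarith) (by linarith)) (by linarith : d + x ≤ d + y)
  have h₂ := Real.convexOn_mul_log.slope_mono (by simp; linarith : d + y ∈ Set.Ici (0 : ℝ))
    (hmem hx' (by linarith)) (hmem hy' (by linarith)) hxy
  rw [slope_comm _ (d + y) x, slope_comm _ (d + y) y] at h₂
  have h := h₁.trans h₂
  simp only [slope_def_field, add_sub_cancel_right] at h
  simpa using (div_le_div_iff_of_pos_right hd).1 h

theorem MonotoneOn.add_le_add_of_eq_zero_or {g : ℝ → ℝ} (hg : MonotoneOn g (Set.Ici 0))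
    {a b p q : ℝ} (ha : 0 ≤ a) (hb : 0 ≤ b) (hp : 0 ≤ p) (hq : 0 ≤ q) (hab : a = 0 ∨ b = 0)
    (hapq : a ≤ p ∨ a ≤ q) (hbpq : b ≤ p ∨ b ≤ q) : g a + g b ≤ g p + g q := by
  have hg0 : ∀ {x : ℝ}, 0 ≤ x → g 0 ≤ g x := fun hx => hg Set.self_mem_Ici hx hx
  rcases hab with rfl | rfl
  · rcases hbpq with h | h
    · linarith [hg hb hp h, hg0 hq]
    · linarith [hg hb hq h, hg0 hp]
  · rcases hapq with h | h
    · linarith [hg ha hp h, hg0 hq]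
    · linarith [hg ha hq h, hg0 hp]

theorem forall_eq_or_forall_eq_of_forall_eq_or_eq {ι X Y : Type*} {F : Finset ι} {x : ι → X}
    {y : ι → Y} (h : ∀ i ∈ F, ∀ j ∈ F, x i = x j ∨ y i = y j) {a : ι} (ha : a ∈ F) :
    (∀ j ∈ F, x j = x a) ∨ (∀ j ∈ F, y j = y a) := by
  by_contra! ⟨⟨i, hi, hxi⟩, ⟨j, hj, hyj⟩⟩
  have hyi := (h i hi a ha).resolve_left hxi
  have hxj := (h j hj a ha).resolve_right hyj
  rcases h i hi j hj with hij | hij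
  · exact hxi (hij.trans hxj)
  · exact hyj (hij.symm.trans hyi)

section Chain

variable {ι X Y U V β : Type*} [DecidableEq X] [DecidableEq Y] [DecidableEq U]
  [DecidableEq V] [LinearOrder β]

theorem fiberMass_le_or_le {W : Type*} [DecidableEq W] {x : ι → X} {y : ι → Y} {w : ι → ℝ}
    {c c' : Finset ι} (hw : ∀ i ∈ c, 0 ≤ w i) (hc' : c' ⊆ c) {a : ι} (ha : a ∈ c) {f : ι → W}
    (hf : ∀ i ∈ c, ∀ j ∈ c, f i = f j → x i = x j ∨ y i = y j) :
    fiberMass c' w f (f a) ≤ fiberMass c' w x (x a) ∨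
      fiberMass c' w f (f a) ≤ fiberMass c' w y (y a) := by
  have hF : ∀ i ∈ c.filter (f · = f a), ∀ j ∈ c.filter (f · = f a), x i = x j ∨ y i = y j :=
    fun i hi j hj => by
      rw [mem_filter] at hi hj
      exact hf i hi.1 j hj.1 (hi.2.trans hj.2.symm)
  refine (forall_eq_or_forall_eq_of_forall_eq_or_eq hF (mem_filter.2 ⟨ha, rfl⟩)).imp
    (fun h => ?_) (fun h => ?_) <;>
  exact fiberMass_le_fiberMass (fun i hi => hw i (hc' hi)) fun i hi hfi =>
    h i (mem_filter.2 ⟨hc' hi, hfi⟩)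

/-- Adding the `r`-largest point `a` raises each entropy by `φ (w a + m) - φ m`, where `m` is the
old mass of the fibre of `a` and `φ x = x log x`; this is monotone in `m`. The fibre of `a` is new
for `t` or for `s`, and each of the two is dominated by a fibre of `x` or of `y`. -/
theorem relEntropy_fiberMass_add_le [DecidableEq ι] (r : ι → β) (x : ι → X) (y : ι → Y)
    (t : ι → U) (s : ι → V) {w : ι → ℝ} {c : Finset ι} (hw : ∀ i ∈ c, 0 ≤ w i)
    (ht : ∀ i ∈ c, ∀ j ∈ c, ∀ k ∈ c, r i ≤ r j → r j ≤ r k → t i = t k → t i = t j)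
    (hs : ∀ i ∈ c, ∀ j ∈ c, ∀ k ∈ c, r i ≤ r j → r j ≤ r k → s i = s k → s i = s j)
    (hts : ∀ i ∈ c, ∀ j ∈ c, t i = t j → s i = s j → i = j)
    (htxy : ∀ i ∈ c, ∀ j ∈ c, t i = t j → x i = x j ∨ y i = y j)
    (hsxy : ∀ i ∈ c, ∀ j ∈ c, s i = s j → x i = x j ∨ y i = y j) :
    relEntropy (fiberMass c w t) + relEntropy (fiberMass c w s) ≤
      relEntropy (fiberMass c w x) + relEntropy (fiberMass c w y) := by
  suffices ∀ c' ⊆ c, relEntropy (fiberMass c' w t) + relEntropy (fiberMass c' w s) ≤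
      relEntropy (fiberMass c' w x) + relEntropy (fiberMass c' w y) from this c subset_rfl
  intro c' hc'
  induction c' using Finset.induction_on_max_value r with
  | empty => simp [fiberMass, relEntropy]
  | insert a c' ha hmax ih =>
    obtain ⟨hac, hc'c⟩ := insert_subset_iff.1 hc'
    have hw' : ∀ i ∈ c', 0 ≤ w i := fun i hi => hw i (hc'c hi)
    have hnew : fiberMass c' w t (t a) = 0 ∨ fiberMass c' w s (s a) = 0 := by
      by_contra! ⟨hT, hS⟩
      obtain ⟨i, hi, hti⟩ := exists_ne_zero_of_sum_ne_zero hT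
      obtain ⟨j, hj, hsj⟩ := exists_ne_zero_of_sum_ne_zero hS
      rw [mem_filter] at hi hj
      rcases le_total (r i) (r j) with hij | hji
      · have := ht i (hc'c hi.1) j (hc'c hj.1) a hac hij (hmax j hj.1) hi.2
        exact ha (hts j (hc'c hj.1) a hac (this ▸ hi.2) hj.2 ▸ hj.1)
      · have := hs j (hc'c hj.1) i (hc'c hi.1) a hac hji (hmax i hi.1) hj.2
        exact ha (hts i (hc'c hi.1) a hac hi.2 (this ▸ hj.2) ▸ hi.1)
    simp only [relEntropy_fiberMass_insert ha]
    have := (monotoneOn_mul_log_add_sub (hw a hac)).add_le_add_of_eq_zero_or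
      (fiberMass_nonneg hw' t (t a)) (fiberMass_nonneg hw' s (s a))
      (fiberMass_nonneg hw' x (x a)) (fiberMass_nonneg hw' y (y a)) hnew
      (fiberMass_le_or_le hw hc'c hac htxy) (fiberMass_le_or_le hw hc'c hac hsxy)
    linarith [ih hc'c]

end Chain

section QuantileCoupling

def overlap (a b a' b' : ℝ) : ℝ := max 0 (min b b' - max a a')

theorem overlap_comm (a b a' b' : ℝ) : overlap a b a' b' = overlap a' b' a b := by
  rw [overlap, overlap, min_comm, max_comm a]

theorem overlap_ne_zero {a b a' b' : ℝ} (h : overlap a b a' b' ≠ 0) : max a a' < min b b' := by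
  by_contra! h'
  exact h (max_eq_left (by linarith))

theorem overlap_add_overlap (a b : ℝ) {p q r : ℝ} (hpq : p ≤ q) (hqr : q ≤ r) :
    overlap a b p q + overlap a b q r = overlap a b p r := by
  simp only [overlap, max_def, min_def]
  split_ifs <;> linarith

variable {X : Type*} [LinearOrder X]

def massLT (s : Finset X) (μ : X → ℝ) (a : X) : ℝ := ∑ x ∈ s with x < a, μ x

def massLE (s : Finset X) (μ : X → ℝ) (a : X) : ℝ := ∑ x ∈ s with x ≤ a, μ x

/-- The comonotone coupling: `[massLT s μ a, massLE s μ a]` is the quantile interval of `a`. -/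
def quantileCoupling (s t : Finset X) (μ ν : X → ℝ) (p : X × X) : ℝ :=
  overlap (massLT s μ p.1) (massLE s μ p.1) (massLT t ν p.2) (massLE t ν p.2)

theorem massLE_eq_massLT_add {s : Finset X} {μ : X → ℝ} (hs : ∀ x ∉ s, μ x = 0) (a : X) :
    massLE s μ a = massLT s μ a + μ a := by
  have h : ∀ x ∈ s, (if x ≤ a then μ x else 0) = (if x < a then μ x else 0) +
      if a = x then μ x else 0 := fun x _ => by
    rcases lt_trichotomy x a with h | rfl | h
    · simp [h.le, h, h.ne']
    · simp
    · simp [h.not_ge, h.not_gt, h.ne]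
  rw [massLE, massLT, sum_filter, sum_filter, sum_congr rfl h, sum_add_distrib, sum_ite_eq]
  split_ifs with ha
  · rfl
  · rw [hs a ha, add_zero]

theorem massLE_le_massLT {s : Finset X} {μ : X → ℝ} (hμ : ∀ x, 0 ≤ μ x) {a a' : X} (h : a < a') :
    massLE s μ a ≤ massLT s μ a' :=
  sum_le_sum_of_subset_of_nonneg
    (fun _ hx => mem_filter.2 ⟨(mem_filter.1 hx).1, (mem_filter.1 hx).2.trans_lt h⟩)
    fun x _ _ => hμ x

theorem massLT_nonneg {s : Finset X} {μ : X → ℝ} (hμ : ∀ x, 0 ≤ μ x) (a : X) :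
    0 ≤ massLT s μ a :=
  sum_nonneg fun x _ => hμ x

theorem massLE_le_sum {s : Finset X} {μ : X → ℝ} (hμ : ∀ x, 0 ≤ μ x) (a : X) :
    massLE s μ a ≤ ∑ x ∈ s, μ x :=
  sum_le_sum_of_subset_of_nonneg (filter_subset _ s) fun x _ _ => hμ x

theorem sum_overlap_massLT_massLE {ν : X → ℝ} (hν : ∀ x, 0 ≤ ν x) (a b : ℝ) (t : Finset X) :
    ∑ y ∈ t, overlap a b (massLT t ν y) (massLE t ν y) = overlap a b 0 (∑ y ∈ t, ν y) := by
  induction t using Finset.induction_on_max with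
  | empty => simp [overlap]
  | insert m t hm ih =>
    have hmt : m ∉ t := fun h => lt_irrefl m (hm m h)
    have hLT : massLT (insert m t) ν m = ∑ y ∈ t, ν y := by
      rw [massLT, filter_insert, if_neg (lt_irrefl m), filter_true_of_mem hm]
    have hLE : massLE (insert m t) ν m = ∑ y ∈ t, ν y + ν m := by
      rw [massLE, filter_insert, if_pos le_rfl, filter_true_of_mem fun y hy => (hm y hy).le,
        sum_insert hmt, add_comm]
    have hold : ∀ y ∈ t, massLT (insert m t) ν y = massLT t ν y ∧
        massLE (insert m t) ν y = massLE t ν y := fun y hy => by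
      simp [massLT, massLE, filter_insert, (hm y hy).not_ge, (hm y hy).not_gt]
    rw [sum_insert hmt, sum_congr rfl fun y hy => by rw [(hold y hy).1, (hold y hy).2], ih, hLT,
      hLE, sum_insert hmt, add_comm (overlap _ _ _ _), overlap_add_overlap a b
        (sum_nonneg fun y _ => hν y) (le_add_of_nonneg_right (hν m)), add_comm (ν m)]

variable {s t : Finset X} {μ ν : X → ℝ}

theorem sum_quantileCoupling_left (hμ : ∀ x, 0 ≤ μ x) (hν : ∀ x, 0 ≤ ν x)
    (hs : ∀ x ∉ s, μ x = 0) (hmass : ∑ x ∈ s, μ x = ∑ y ∈ t, ν y) (a : X) :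
    ∑ b ∈ t, quantileCoupling s t μ ν (a, b) = μ a := by
  simp only [quantileCoupling]
  rw [sum_overlap_massLT_massLE hν, ← hmass, overlap, massLE_eq_massLT_add hs,
    min_eq_left (by rw [← massLE_eq_massLT_add hs]; exact massLE_le_sum hμ a),
    max_eq_left (massLT_nonneg hμ a)]
  simp [hμ a]

theorem quantileCoupling_swap (p : X × X) :
    quantileCoupling s t μ ν p = quantileCoupling t s ν μ p.swap :=
  overlap_comm _ _ _ _

theorem mem_of_quantileCoupling_ne_zero (hs : ∀ x ∉ s, μ x = 0) (ht : ∀ x ∉ t, ν x = 0)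
    {p : X × X} (hp : quantileCoupling s t μ ν p ≠ 0) : p.1 ∈ s ∧ p.2 ∈ t := by
  have h := overlap_ne_zero hp
  simp only [max_lt_iff, lt_min_iff] at h
  refine ⟨by_contra fun h' => ?_, by_contra fun h' => ?_⟩
  · linarith [massLE_eq_massLT_add hs p.1, hs p.1 h']
  · linarith [massLE_eq_massLT_add ht p.2, ht p.2 h']

theorem quantileCoupling_eq_zero_of_lt_of_lt (hμ : ∀ x, 0 ≤ μ x) (hν : ∀ x, 0 ≤ ν x)
    {a a' b b' : X} (ha : a < a') (hb : b' < b) (h : quantileCoupling s t μ ν (a, b) ≠ 0) :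
    quantileCoupling s t μ ν (a', b') = 0 := by
  by_contra h'
  have h₁ := overlap_ne_zero h
  have h₂ := overlap_ne_zero h'
  simp only [max_lt_iff, lt_min_iff] at h₁ h₂
  linarith [massLE_le_massLT (s := s) hμ ha, massLE_le_massLT (s := t) hν hb]

theorem isChain_quantileCoupling (hμ : ∀ x, 0 ≤ μ x) (hν : ∀ x, 0 ≤ ν x) :
    IsChain (· ≤ ·) {p | quantileCoupling s t μ ν p ≠ 0} := by
  rintro ⟨a, b⟩ hp ⟨a', b'⟩ hq -
  simp only [Prod.mk_le_mk]
  rcases le_total a a' with ha | ha <;> rcases le_total b b' with hb | hb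
  · exact Or.inl ⟨ha, hb⟩
  · rcases ha.eq_or_lt with rfl | ha
    · exact Or.inr ⟨le_rfl, hb⟩
    rcases hb.eq_or_lt with rfl | hb
    · exact Or.inl ⟨ha.le, le_rfl⟩
    exact absurd (quantileCoupling_eq_zero_of_lt_of_lt hμ hν ha hb hp) hq
  · rcases ha.eq_or_lt with rfl | ha
    · exact Or.inl ⟨le_rfl, hb⟩
    rcases hb.eq_or_lt with rfl | hb
    · exact Or.inr ⟨ha.le, le_rfl⟩
    exact absurd (quantileCoupling_eq_zero_of_lt_of_lt hμ hν ha hb hq) hp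
  · exact Or.inr ⟨ha, hb⟩

theorem isCoupling_quantileCoupling (hμ : IsPMF μ) (hν : IsPMF ν) (hs : ∀ x ∉ s, μ x = 0)
    (ht : ∀ x ∉ t, ν x = 0) : IsCoupling (quantileCoupling s t μ ν) μ ν := by
  have hmass : ∑ x ∈ s, μ x = ∑ y ∈ t, ν y := by
    rw [← finsum_eq_sum_of_support_subset μ fun x hx => by_contra fun h => hx (hs x h),
      ← finsum_eq_sum_of_support_subset ν fun x hx => by_contra fun h => hx (ht x h),
      hμ.2.2, hν.2.2]
  have hsupp : ∀ p ∉ s ×ˢ t, quantileCoupling s t μ ν p = 0 := fun p hp => by_contra fun h =>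
    hp (mem_product.2 (mem_of_quantileCoupling_ne_zero hs ht h))
  have h₁ : ∀ a, ∑ᶠ b, quantileCoupling s t μ ν (a, b) = μ a := fun a => by
    rw [finsum_eq_sum_of_support_subset _ (s := t) fun b hb => by_contra fun h =>
      hb (hsupp _ fun h' => h (mem_product.1 h').2),
      sum_quantileCoupling_left hμ.1 hν.1 hs hmass]
  have h₂ : ∀ b, ∑ᶠ a, quantileCoupling s t μ ν (a, b) = ν b := fun b => by
    rw [finsum_eq_sum_of_support_subset _ (s := s) fun a ha => by_contra fun h =>
      ha (hsupp _ fun h' => h (mem_product.1 h').1)]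
    simp only [quantileCoupling_swap (s := s)]
    exact sum_quantileCoupling_left hν.1 hμ.1 ht hmass.symm b
  refine ⟨IsPMF.of_pushforward (f := Prod.fst) (fun p => le_max_left _ _)
    ((s ×ˢ t).finite_toSet.subset fun p hp => by_contra fun h => hp (hsupp p h)) ?_, h₁, h₂⟩
  convert hμ using 1
  exact funext fun a => (pushforward_fst_apply _ a).trans (h₁ a)

end QuantileCoupling

theorem TranslationEquivariant.complement {G : Type*} [AddCommGroup G] {T : G → G → G}
    (hT : TranslationEquivariant T) : TranslationEquivariant fun x y => x + y - T x y :=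
  fun x y z => by
    change x + z + (y + z) - T (x + z) (y + z) = x + y - T x y + z
    rw [hT]; abel

section OneBlock

variable {X Z : Type*} [LinearOrder X]

theorem IsChain.le_of_toLex_le {c : Set (X × X)} (hc : IsChain (· ≤ ·) c) {p q : X × X}
    (hp : p ∈ c) (hq : q ∈ c) (h : toLex p ≤ toLex q) : p ≤ q := by
  rcases eq_or_ne p q with rfl | hne
  · exact le_rfl
  refine (hc hp hq hne).resolve_right fun h' => hne ?_
  exact toLex.injective (le_antisymm h (Prod.Lex.toLex_mono h'))

theorem IsChain.map_eq_of_toLex_le_of_le [PartialOrder Z] {c : Set (X × X)}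
    (hc : IsChain (· ≤ ·) c) {f : X × X → Z} (hf : Monotone f) {i j k : X × X} (hi : i ∈ c)
    (hj : j ∈ c) (hk : k ∈ c) (hij : toLex i ≤ toLex j) (hjk : toLex j ≤ toLex k)
    (hik : f i = f k) : f i = f j :=
  le_antisymm (hf (hc.le_of_toLex_le hi hj hij))
    (hik ▸ hf (hc.le_of_toLex_le hj hk hjk))

theorem IsChain.eq_or_eq_of_map_eq [Preorder Z] {c : Set (X × X)} (hc : IsChain (· ≤ ·) c)
    {f : X × X → Z} (hf : ∀ p q : X × X, p.1 < q.1 → p.2 < q.2 → f p < f q) {i j : X × X}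
    (hi : i ∈ c) (hj : j ∈ c) (hij : f i = f j) : i.1 = j.1 ∨ i.2 = j.2 := by
  by_contra! ⟨h₁, h₂⟩
  rcases hc hi hj (fun h => h₁ (h ▸ rfl)) with h | h
  · exact (hf i j (lt_of_le_of_ne h.1 h₁) (lt_of_le_of_ne h.2 h₂)).ne hij
  · exact (hf j i (lt_of_le_of_ne h.1 h₁.symm) (lt_of_le_of_ne h.2 h₂.symm)).ne hij.symm

variable [AddCommGroup X] [IsOrderedAddMonoid X]

theorem IsChain.eq_of_add_eq_add {c : Set (X × X)} (hc : IsChain (· ≤ ·) c) {i j : X × X}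
    (hi : i ∈ c) (hj : j ∈ c) (h : i.1 + i.2 = j.1 + j.2) : i = j := by
  rcases eq_or_ne i j with rfl | hne
  · rfl
  rcases hc hi hj hne with h' | h'
  · exact Prod.ext_iff.2 ((add_eq_add_iff_eq_and_eq h'.1 h'.2).1 h)
  · exact (Prod.ext_iff.2 ((add_eq_add_iff_eq_and_eq h'.1 h'.2).1 h.symm)).symm

theorem TranslationEquivariant.lt_of_lt_of_lt {u : X} (hu : IsMinimalPositive (· ≤ ·) u)
    {T : X → X → X} (hTE : TranslationEquivariant T) (hT : Monotone (uncurry T)) {a a' b b' : X}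
    (ha : a < a') (hb : b < b') : T a b < T a' b' := by
  have hstep : ∀ {x x' : X}, x < x' → x + u ≤ x' := fun h =>
    le_sub_iff_add_le'.1 (hu.2 _ (sub_nonneg.2 h.le) (sub_ne_zero.2 h.ne'))
  calc T a b < T a b + u := lt_add_of_pos_right _ (lt_of_le_of_ne hu.1.1 hu.1.2.symm)
    _ = T (a + u) (b + u) := (hTE a b u).symm
    _ ≤ T a' b' := hT (Prod.mk_le_mk.2 ⟨hstep ha, hstep hb⟩)

theorem hasEntropyCoupling_of_monotone {u : X} (hu : IsMinimalPositive (· ≤ ·) u)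
    {T : X → X → X} (hTE : TranslationEquivariant T) (hT : Monotone (uncurry T))
    (hS : Monotone (uncurry fun x y => x + y - T x y)) {μ ν : X → ℝ} (hμ : IsPMF μ)
    (hν : IsPMF ν) : HasEntropyCoupling T (fun x y => x + y - T x y) μ ν := by
  classical
  obtain ⟨s, hs, -⟩ := hμ.exists_finset
  obtain ⟨t, ht, -⟩ := hν.exists_finset
  have hw := isCoupling_quantileCoupling hμ hν hs ht
  set w := quantileCoupling s t μ ν
  set c := (s ×ˢ t).filter (w · ≠ 0)
  have hc : ∀ p ∉ c, w p = 0 := fun p hp => by_contra fun h =>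
    hp (mem_filter.2 ⟨mem_product.2 (mem_of_quantileCoupling_ne_zero hs ht h), h⟩)
  have hchain : IsChain (· ≤ ·) (c : Set (X × X)) :=
    (isChain_quantileCoupling hμ.1 hν.1).mono fun p hp => (mem_filter.1 hp).2
  refine ⟨w, hw, ?_⟩
  obtain ⟨-, hw₁, hw₂⟩ := isCoupling_iff.1 hw
  conv_rhs => rw [← hw₁, ← hw₂]
  simp only [pushforward_eq_fiberMass hc]
  refine relEntropy_fiberMass_add_le toLex Prod.fst Prod.snd _ _ (fun p _ => le_max_left _ _)
    (fun i hi j hj k hk => hchain.map_eq_of_toLex_le_of_le hT hi hj hk)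
    (fun i hi j hj k hk => hchain.map_eq_of_toLex_le_of_le hS hi hj hk)
    (fun i hi j hj hTij hSij => hchain.eq_of_add_eq_add hi hj ?_)
    (fun i hi j hj => hchain.eq_or_eq_of_map_eq (fun _ _ => hTE.lt_of_lt_of_lt hu hT) hi hj)
    (fun i hi j hj =>
      hchain.eq_or_eq_of_map_eq (fun _ _ => hTE.complement.lt_of_lt_of_lt hu hS) hi hj)
  simpa [hTij] using congrArg₂ (· + ·) hTij hSij

end OneBlock

theorem mul_mul_log_mul (x y : ℝ) :
    x * y * Real.log (x * y) = y * (x * Real.log x) + x * (y * Real.log y) := by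
  have h := Real.negMulLog_mul x y
  simp only [Real.negMulLog] at h
  linarith

/-- Jensen's inequality for `x ↦ x log x` with unnormalised weights. -/
theorem mul_log_sum_le {ι : Type*} (F : Finset ι) {l x : ι → ℝ} (hl : ∀ i ∈ F, 0 ≤ l i)
    (hx : ∀ i ∈ F, 0 ≤ x i) :
    (∑ i ∈ F, l i * x i) * Real.log (∑ i ∈ F, l i * x i) ≤
      (∑ i ∈ F, l i * x i) * Real.log (∑ i ∈ F, l i) + ∑ i ∈ F, l i * (x i * Real.log (x i)) := by
  set L := ∑ i ∈ F, l i
  rcases (sum_nonneg hl).eq_or_lt with hL | hL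
  · have h0 : ∀ i ∈ F, l i = 0 := (sum_eq_zero_iff_of_nonneg hl).1 hL.symm
    rw [sum_eq_zero fun i hi => by rw [h0 i hi, zero_mul],
      sum_eq_zero fun i hi => by rw [h0 i hi, zero_mul]]
    simp
  have hL' : L ≠ 0 := hL.ne'
  set m := ∑ i ∈ F, (l i / L) * x i
  have hsum : ∑ i ∈ F, l i * x i = L * m := by
    rw [mul_sum]
    exact sum_congr rfl fun i _ => by field_simp
  have hjensen : m * Real.log m ≤ ∑ i ∈ F, (l i / L) * (x i * Real.log (x i)) := by
    simpa using Real.convexOn_mul_log.map_sum_le (t := F) (w := fun i => l i / L)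
      (p := x) (fun i hi => div_nonneg (hl i hi) hL.le)
      (by rw [← sum_div, div_self hL']) hx
  have hscale : ∑ i ∈ F, l i * (x i * Real.log (x i)) =
      L * ∑ i ∈ F, (l i / L) * (x i * Real.log (x i)) := by
    rw [mul_sum]
    exact sum_congr rfl fun i _ => by field_simp
  rw [hsum, mul_mul_log_mul, hscale]
  nlinarith

section Gluing

variable {X Y X' Y' U V U' V' : Type*}

/-- This is `0` when `a` has no mass. -/
noncomputable def conditional (μ : X × Y → ℝ) (a : X) (y : Y) : ℝ :=
  μ (a, y) / pushforward Prod.fst μ a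

theorem pushforward_fst_mul_conditional {μ : X × Y → ℝ} (hμ : IsPMF μ) (a : X) (y : Y) :
    pushforward Prod.fst μ a * conditional μ a y = μ (a, y) := by
  rcases eq_or_ne (pushforward Prod.fst μ a) 0 with h | h
  · have := le_pushforward hμ Prod.fst (a, y)
    rw [h] at this
    simp [h, le_antisymm this (hμ.1 _)]
  · exact mul_div_cancel₀ _ h

theorem IsPMF.conditional {μ : X × Y → ℝ} (hμ : IsPMF μ) {a : X}
    (ha : 0 < pushforward Prod.fst μ a) : IsPMF (conditional μ a) := by
  refine ⟨fun y => div_nonneg (hμ.1 _) ha.le,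
    (hμ.2.1.preimage (Prod.mk_right_injective a).injOn).subset fun y hy => ?_, ?_⟩
  · exact left_ne_zero_of_mul (by simpa [_root_.conditional, div_eq_mul_inv] using hy)
  · simp only [_root_.conditional, div_eq_mul_inv]
    rw [← finsum_mul, ← pushforward_fst_apply, mul_inv_cancel₀ ha.ne']

theorem relEntropy_eq_add_finsum_conditional {μ : X × Y → ℝ} (hμ : IsPMF μ) :
    relEntropy μ = relEntropy (pushforward Prod.fst μ) +
      ∑ᶠ a, pushforward Prod.fst μ a * relEntropy (conditional μ a) := by
  set m := pushforward Prod.fst μ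
  have hsplit : ∀ p : X × Y, μ p * Real.log (μ p) = μ p * Real.log (m p.1) +
      m p.1 * (conditional μ p.1 p.2 * Real.log (conditional μ p.1 p.2)) := fun p => by
    have h := pushforward_fst_mul_conditional hμ p.1 p.2
    rw [Prod.mk.eta] at h
    rw [← h, mul_mul_log_mul]
    ring
  have hvan : ∀ p : X × Y, μ p = 0 → conditional μ p.1 p.2 = 0 := fun p hp => by
    simp [_root_.conditional, hp]
  have hfin₁ : (support fun p : X × Y => μ p * Real.log (m p.1)).Finite :=
    hμ.2.1.subset fun p hp => left_ne_zero_of_mul hp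
  have hfin₂ : (support fun p : X × Y =>
      m p.1 * (conditional μ p.1 p.2 * Real.log (conditional μ p.1 p.2))).Finite :=
    hμ.2.1.subset fun p hp h => hp (by simp [hvan p h])
  rw [relEntropy, finsum_congr hsplit, finsum_add_distrib hfin₁ hfin₂, relEntropy,
    finsum_pushforward_mul hμ.2.1, finsum_curry _ hfin₂]
  simp only [relEntropy, mul_finsum]

theorem relEntropy_mixture_le {ι : Type*} [DecidableEq U] (c : Finset ι) {l : ι → ℝ}
    (hl : ∀ i ∈ c, 0 ≤ l i) (f : ι → U) {ρ : ι → V → ℝ} (hρ : ∀ i ∈ c, IsPMF (ρ i)) :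
    relEntropy (fun z : U × V => ∑ i ∈ c with f i = z.1, l i * ρ i z.2) ≤
      relEntropy (fiberMass c l f) + ∑ i ∈ c, l i * relEntropy (ρ i) := by
  obtain ⟨t, ht⟩ := exists_finset_of_forall_isPMF c hρ
  set θ := fun z : U × V => ∑ i ∈ c with f i = z.1, l i * ρ i z.2
  have hθ : ∀ z ∉ c.image f ×ˢ t, θ z = 0 := fun z hz => sum_eq_zero fun i hi => by
    rw [mem_filter] at hi
    rw [ht i hi.1 z.2 fun h => hz (mem_product.2 ⟨hi.2 ▸ mem_image_of_mem f hi.1, h⟩), mul_zero]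
  have hfiber : ∀ u, ∑ v ∈ t, θ (u, v) * Real.log (θ (u, v)) ≤
      fiberMass c l f u * Real.log (fiberMass c l f u) +
        ∑ i ∈ c with f i = u, l i * ∑ v ∈ t, ρ i v * Real.log (ρ i v) := by
    intro u
    have hmass : ∑ v ∈ t, θ (u, v) = fiberMass c l f u := by
      change ∑ v ∈ t, ∑ i ∈ c with f i = u, l i * ρ i v = _
      rw [sum_comm, fiberMass]
      refine sum_congr rfl fun i hi => ?_
      rw [← mul_sum, ← finsum_eq_sum_of_support_subset _ fun v hv =>
        by_contra fun h => hv (ht i (mem_filter.1 hi).1 v h), (hρ i (mem_filter.1 hi).1).2.2,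
        mul_one]
    calc ∑ v ∈ t, θ (u, v) * Real.log (θ (u, v))
        ≤ ∑ v ∈ t, (θ (u, v) * Real.log (fiberMass c l f u) +
            ∑ i ∈ c with f i = u, l i * (ρ i v * Real.log (ρ i v))) :=
          sum_le_sum fun v _ => mul_log_sum_le _ (fun i hi => hl i (mem_filter.1 hi).1)
            fun i hi => (hρ i (mem_filter.1 hi).1).1 v
      _ = _ := by
          rw [sum_add_distrib, ← sum_mul, hmass, sum_comm]
          simp only [mul_sum]
  rw [relEntropy_eq_sum hθ,
    relEntropy_eq_sum (s := c.image f) fun _ hu => fiberMass_eq_zero_of_notMem_image hu,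
    sum_product, ← sum_fiberwise_of_maps_to (fun i hi => mem_image_of_mem f hi)
      fun i => l i * relEntropy (ρ i), ← sum_add_distrib]
  refine sum_le_sum fun u _ => (hfiber u).trans_eq ?_
  congr 1
  exact sum_congr rfl fun i hi => by
    rw [relEntropy_eq_sum (ht i (mem_filter.1 hi).1)]


def glue (π₁ : X × X' → ℝ) (ρ : X × X' → Y × Y' → ℝ) (p : (X × Y) × (X' × Y')) : ℝ :=
  π₁ (p.1.1, p.2.1) * ρ (p.1.1, p.2.1) (p.1.2, p.2.2)

theorem mul_eq_zero_of_notMem_product {π₁ : X × X' → ℝ} {c : Finset (X × X')}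
    (hc : ∀ ab ∉ c, π₁ ab = 0) {ρ : X × X' → Y × Y' → ℝ} {t : Finset (Y × Y')}
    (ht : ∀ ab ∈ c, ∀ r ∉ t, ρ ab r = 0) {q : (X × X') × (Y × Y')} (hq : q ∉ c ×ˢ t) :
    π₁ q.1 * ρ q.1 q.2 = 0 := by
  by_cases hab : q.1 ∈ c
  · rw [ht _ hab q.2 fun h => hq (mem_product.2 ⟨hab, h⟩), mul_zero]
  · rw [hc _ hab, zero_mul]

theorem pushforward_glue [DecidableEq U] {π₁ : X × X' → ℝ} {c : Finset (X × X')}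
    (hc : ∀ ab ∉ c, π₁ ab = 0) {ρ : X × X' → Y × Y' → ℝ} (hρ : ∀ ab ∈ c, IsPMF (ρ ab))
    (K : X × Y → X' × Y' → U × V) (K₁ : X → X' → U) (hK : ∀ p q, (K p q).1 = K₁ p.1 q.1) :
    pushforward (fun p => K p.1 p.2) (glue π₁ ρ) = fun z =>
      ∑ ab ∈ c with K₁ ab.1 ab.2 = z.1,
        π₁ ab * pushforward (fun r => (K (ab.1, r.1) (ab.2, r.2)).2) (ρ ab) z.2 := by
  classical
  obtain ⟨t, ht⟩ := exists_finset_of_forall_isPMF c hρ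
  set E := Equiv.prodProdProdComm X Y X' Y'
  have hg : ∀ q ∉ c ×ˢ t, π₁ q.1 * ρ q.1 q.2 = 0 := fun q hq =>
    mul_eq_zero_of_notMem_product hc ht hq
  funext z
  rw [show glue π₁ ρ = (fun q => π₁ q.1 * ρ q.1 q.2) ∘ E.symm.symm from rfl,
    pushforward_comp_equiv, pushforward_eq_fiberMass hg, fiberMass, sum_filter, sum_product,
    sum_filter]
  refine sum_congr rfl fun ab hab => ?_
  rw [pushforward_eq_fiberMass (ht ab hab), fiberMass, sum_filter, mul_sum]
  split_ifs with h
  · refine sum_congr rfl fun r _ => ?_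
    simp [E, Prod.ext_iff, hK, h]
  · exact sum_eq_zero fun r _ => by simp [E, Prod.ext_iff, hK, h]

theorem relEntropy_pushforward_glue_le [DecidableEq U] {π₁ : X × X' → ℝ} {c : Finset (X × X')}
    (hc : ∀ ab ∉ c, π₁ ab = 0) (hπ₁ : ∀ ab, 0 ≤ π₁ ab) {ρ : X × X' → Y × Y' → ℝ}
    (hρ : ∀ ab ∈ c, IsPMF (ρ ab)) (K : X × Y → X' × Y' → U × V) (K₁ : X → X' → U)
    (hK : ∀ p q, (K p q).1 = K₁ p.1 q.1) :
    relEntropy (pushforward (fun p => K p.1 p.2) (glue π₁ ρ)) ≤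
      relEntropy (pushforward (fun p => K₁ p.1 p.2) π₁) +
        ∑ ab ∈ c, π₁ ab *
          relEntropy (pushforward (fun r => (K (ab.1, r.1) (ab.2, r.2)).2) (ρ ab)) := by
  rw [pushforward_glue hc hρ K K₁ hK, pushforward_eq_fiberMass hc]
  exact relEntropy_mixture_le c (fun ab _ => hπ₁ ab) _ fun ab hab => (hρ ab hab).map _

theorem relEntropy_eq_add_sum_conditional {Z W : Type*} {π₁ : X × X' → ℝ}
    (hπ₁ : (support π₁).Finite) {c : Finset (X × X')} (hc : ∀ ab ∉ c, π₁ ab = 0)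
    (f : X × X' → Z) {κ : Z × W → ℝ} (hκ : IsPMF κ)
    (hf : pushforward f π₁ = pushforward Prod.fst κ) :
    relEntropy κ = relEntropy (pushforward Prod.fst κ) +
      ∑ ab ∈ c, π₁ ab * relEntropy (conditional κ (f ab)) := by
  rw [relEntropy_eq_add_finsum_conditional hκ, ← hf, finsum_pushforward_mul hπ₁,
    finsum_eq_sum_of_support_subset _ fun ab hab => by_contra fun h => hab (by simp [hc ab h])]

theorem isCoupling_glue {μ : X × Y → ℝ} {ν : X' × Y' → ℝ} (hμ : IsPMF μ) (hν : IsPMF ν)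
    {π₁ : X × X' → ℝ} (hπ₁ : IsCoupling π₁ (pushforward Prod.fst μ) (pushforward Prod.fst ν))
    {c : Finset (X × X')} (hc : ∀ ab ∉ c, π₁ ab = 0) {ρ : X × X' → Y × Y' → ℝ}
    (hρ : ∀ ab ∈ c, IsCoupling (ρ ab) (conditional μ ab.1) (conditional ν ab.2)) :
    IsCoupling (glue π₁ ρ) μ ν := by
  classical
  obtain ⟨hπ₁, hμ₁, hν₁⟩ := isCoupling_iff.1 hπ₁
  have hρpmf : ∀ ab ∈ c, IsPMF (ρ ab) := fun ab hab => (hρ ab hab).1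
  have hfst : pushforward Prod.fst (glue π₁ ρ) = μ := by
    rw [show (Prod.fst : (X × Y) × (X' × Y') → X × Y) = fun p => (fun p _ => p) p.1 p.2 from rfl,
      pushforward_glue hc hρpmf _ (fun a _ => a) fun _ _ => rfl]
    funext ⟨a, y⟩
    rw [← pushforward_fst_mul_conditional hμ, ← hμ₁, pushforward_eq_fiberMass hc, fiberMass,
      sum_mul]
    refine sum_congr rfl fun ab hab => ?_
    rw [(isCoupling_iff.1 (hρ ab (mem_filter.1 hab).1)).2.1, (mem_filter.1 hab).2]
  have hsnd : pushforward Prod.snd (glue π₁ ρ) = ν := by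
    rw [show (Prod.snd : (X × Y) × (X' × Y') → X' × Y') = fun p => (fun _ q => q) p.1 p.2 from
      rfl, pushforward_glue hc hρpmf _ (fun _ b => b) fun _ _ => rfl]
    funext ⟨b, y'⟩
    rw [← pushforward_fst_mul_conditional hν, ← hν₁, pushforward_eq_fiberMass hc, fiberMass,
      sum_mul]
    refine sum_congr rfl fun ab hab => ?_
    rw [(isCoupling_iff.1 (hρ ab (mem_filter.1 hab).1)).2.2, (mem_filter.1 hab).2]
  obtain ⟨t, ht⟩ := exists_finset_of_forall_isPMF c hρpmf
  set E := Equiv.prodProdProdComm X Y X' Y'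
  refine isCoupling_iff.2 ⟨IsPMF.of_pushforward (f := Prod.fst) (fun p => ?_) ?_ (hfst ▸ hμ),
    hfst, hsnd⟩
  · by_cases hp : (p.1.1, p.2.1) ∈ c
    · exact mul_nonneg (hπ₁.1 _) ((hρpmf _ hp).1 _)
    · rw [glue, hc _ hp, zero_mul]
  · exact ((c ×ˢ t).finite_toSet.image E.symm).subset fun p hp =>
      ⟨E p, by_contra fun h => hp (mul_eq_zero_of_notMem_product hc ht (q := E p) h), by simp [E]⟩

theorem hasEntropyCoupling_of_conditional {F : X × Y → X' × Y' → U × V}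
    {G : X × Y → X' × Y' → U' × V'} {F₁ : X → X' → U} {G₁ : X → X' → U'}
    (hF : ∀ p q, (F p q).1 = F₁ p.1 q.1) (hG : ∀ p q, (G p q).1 = G₁ p.1 q.1)
    {μ : X × Y → ℝ} {ν : X' × Y' → ℝ} (hμ : IsPMF μ) (hν : IsPMF ν)
    (h₁ : HasEntropyCoupling F₁ G₁ (pushforward Prod.fst μ) (pushforward Prod.fst ν))
    (h₂ : ∀ a b, 0 < pushforward Prod.fst μ a → 0 < pushforward Prod.fst ν b →
      HasEntropyCoupling (fun y y' => (F (a, y) (b, y')).2) (fun y y' => (G (a, y) (b, y')).2)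
        (conditional μ a) (conditional ν b)) :
    HasEntropyCoupling F G μ ν := by
  classical
  obtain ⟨π₁, hπ₁c, hH₁⟩ := h₁
  obtain ⟨hπ₁, hμ₁, hν₁⟩ := isCoupling_iff.1 hπ₁c
  obtain ⟨c, hc, hc'⟩ := hπ₁.exists_finset
  have hpos : ∀ ab ∈ c, 0 < pushforward Prod.fst μ ab.1 ∧ 0 < pushforward Prod.fst ν ab.2 :=
    fun ab hab => by
      have h := lt_of_le_of_ne (hπ₁.1 ab) (hc' ab hab).symm
      rw [← hμ₁, ← hν₁]
      exact ⟨h.trans_le (le_pushforward hπ₁ _ ab), h.trans_le (le_pushforward hπ₁ _ ab)⟩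
  have hρ : ∀ ab : X × X', ∃ ρ : Y × Y' → ℝ, ab ∈ c →
      IsCoupling ρ (conditional μ ab.1) (conditional ν ab.2) ∧
        relEntropy (pushforward (fun r => (F (ab.1, r.1) (ab.2, r.2)).2) ρ) +
          relEntropy (pushforward (fun r => (G (ab.1, r.1) (ab.2, r.2)).2) ρ) ≤
            relEntropy (conditional μ ab.1) + relEntropy (conditional ν ab.2) := fun ab => by
    by_cases hab : ab ∈ c
    · obtain ⟨ρ, hρ⟩ := h₂ ab.1 ab.2 (hpos ab hab).1 (hpos ab hab).2
      exact ⟨ρ, fun _ => hρ⟩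
    · exact ⟨0, fun h => (hab h).elim⟩
  choose ρ hρ using hρ
  have hρpmf : ∀ ab ∈ c, IsPMF (ρ ab) := fun ab hab => (hρ ab hab).1.1
  refine ⟨glue π₁ ρ, isCoupling_glue hμ hν hπ₁c hc fun ab hab => (hρ ab hab).1, ?_⟩
  have hcond : ∑ ab ∈ c, π₁ ab *
      (relEntropy (pushforward (fun r => (F (ab.1, r.1) (ab.2, r.2)).2) (ρ ab)) +
        relEntropy (pushforward (fun r => (G (ab.1, r.1) (ab.2, r.2)).2) (ρ ab))) ≤
      ∑ ab ∈ c, π₁ ab * (relEntropy (conditional μ ab.1) + relEntropy (conditional ν ab.2)) :=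
    sum_le_sum fun ab hab => mul_le_mul_of_nonneg_left (hρ ab hab).2 (hπ₁.1 ab)
  simp only [mul_add, sum_add_distrib] at hcond
  linarith [relEntropy_pushforward_glue_le hc hπ₁.1 hρpmf F F₁ hF,
    relEntropy_pushforward_glue_le hc hπ₁.1 hρpmf G G₁ hG,
    relEntropy_eq_add_sum_conditional hπ₁.2.1 hc Prod.fst hμ hμ₁,
    relEntropy_eq_add_sum_conditional hπ₁.2.1 hc Prod.snd hν hν₁]

end Gluing

noncomputable abbrev TotalAdditiveOrdering.linearOrder {G : Type*} [AddCommGroup G]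
    {r : G → G → Prop} (h : TotalAdditiveOrdering r) : LinearOrder G where
  le := r
  le_refl := h.1
  le_trans := h.2.2.1
  le_antisymm := h.2.1
  le_total := h.2.2.2.1
  toDecidableLE := Classical.decRel _

theorem TotalAdditiveOrdering.isOrderedAddMonoid {G : Type*} [AddCommGroup G]
    {r : G → G → Prop} (h : TotalAdditiveOrdering r) :
    letI := h.linearOrder
    IsOrderedAddMonoid G :=
  letI := h.linearOrder
  { add_le_add_left := fun a b hab c => h.2.2.2.2 a b c hab }

theorem IsPMF.relEntropy_eq_zero {A : Type*} [Unique A] {μ : A → ℝ} (hμ : IsPMF μ) :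
    relEntropy μ = 0 := by
  have h : μ default = 1 := (finsum_unique μ).symm.trans hμ.2.2
  rw [relEntropy, finsum_unique, h, Real.log_one, mul_zero]

theorem hasEntropyCoupling_of_unique {A C D : Type*} [Unique A] [Unique C] [Unique D]
    (F : A → A → C) (G : A → A → D) {μ ν : A → ℝ} (hμ : IsPMF μ) (hν : IsPMF ν) :
    HasEntropyCoupling F G μ ν := by
  let : Unique (A × A) := Unique.mk' _
  have hπ : IsPMF fun _ : A × A => (1 : ℝ) :=
    ⟨fun _ => zero_le_one, Set.toFinite _, finsum_unique _⟩
  have hone : ∀ {κ : A → ℝ}, IsPMF κ → ∀ x, κ x = 1 := fun {κ} hκ x =>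
    Unique.eq_default x ▸ (finsum_unique κ).symm.trans hκ.2.2
  refine ⟨fun _ => 1, ⟨hπ, fun x => ?_, fun y => ?_⟩, ?_⟩
  · rw [finsum_unique, hone hμ]
  · rw [finsum_unique, hone hν]
  · rw [(hπ.map _).relEntropy_eq_zero, (hπ.map _).relEntropy_eq_zero, hμ.relEntropy_eq_zero,
      hν.relEntropy_eq_zero]

section Blocks

variable {k : ℕ}

/-- `KnotheWith`, read in the coordinates of a product of arbitrary blocks. -/
def IsKnotheMonotone {B : Fin k → Type*} (ord : ∀ i, B i → B i → Prop)
    (T : (∀ i, B i) → (∀ i, B i) → ∀ i, B i) : Prop :=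
  (∀ i x y x' y', (∀ j ≤ i, x j = x' j ∧ y j = y' j) → T x y i = T x' y' i) ∧
  ∀ i x y x' y', (∀ j < i, x j = x' j ∧ y j = y' j) → ord i (x i) (x' i) → ord i (y i) (y' i) →
    ord i (T x y i) (T x' y' i)

theorem KnotheWith.isKnotheMonotone {n : ℕ} {ℓ : Fin k → ℕ}
    {e : (Fin n → ℤ) ≃+ ((i : Fin k) → Fin (ℓ i) → ℤ)}
    {ord : (i : Fin k) → (Fin (ℓ i) → ℤ) → (Fin (ℓ i) → ℤ) → Prop}
    {T : (Fin n → ℤ) → (Fin n → ℤ) → (Fin n → ℤ)} (h : KnotheWith ℓ e ord T) :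
    IsKnotheMonotone ord fun x y => e (T (e.symm x) (e.symm y)) :=
  ⟨fun i x y x' y' hxy => h.1 i _ _ _ _ (by simpa using hxy),
    fun i x y x' y' hxy hx hy => h.2 i _ _ _ _ (by simpa using hxy) (by simpa using hx)
      (by simpa using hy)⟩

variable {B : Fin (k + 1) → Type*} {ord : ∀ i, B i → B i → Prop}
  {T : (∀ i, B i) → (∀ i, B i) → ∀ i, B i}

theorem IsKnotheMonotone.tail (hT : IsKnotheMonotone ord T) (a b : B 0) :
    IsKnotheMonotone (fun i => ord i.succ)
      fun q q' => Fin.tail (T (Fin.cons a q) (Fin.cons b q')) := by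
  refine ⟨fun i q q' r r' h => hT.1 i.succ (Fin.cons a q) (Fin.cons b q') (Fin.cons a r)
    (Fin.cons b r') fun j hj => ?_, fun i q q' r r' h => hT.2 i.succ (Fin.cons a q)
    (Fin.cons b q') (Fin.cons a r) (Fin.cons b r') fun j hj => ?_⟩
  · cases j using Fin.cases with
    | zero => simp
    | succ j => simpa using h j (Fin.succ_le_succ_iff.1 hj)
  · cases j using Fin.cases with
    | zero => simp
    | succ j => simpa using h j (Fin.succ_lt_succ_iff.1 hj)

variable [∀ i, AddCommGroup (B i)]

theorem Fin.cons_add_cons' (a b : B 0) (q q' : ∀ i : Fin k, B i.succ) :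
    (Fin.cons (a + b) (q + q') : ∀ i, B i) = Fin.cons a q + Fin.cons b q' := by
  funext i
  cases i using Fin.cases <;> rfl

theorem IsKnotheMonotone.apply_cons_zero (hT : IsKnotheMonotone ord T) (a b : B 0)
    (q q' : ∀ i : Fin k, B i.succ) :
    T (Fin.cons a q) (Fin.cons b q') 0 = T (Fin.cons a 0) (Fin.cons b 0) 0 :=
  hT.1 0 _ _ _ _ fun j hj => by rw [Fin.le_zero_iff.1 hj]; simp

theorem IsKnotheMonotone.monotone_zero (hT : IsKnotheMonotone ord T) {a a' b b' : B 0}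
    (ha : ord 0 a a') (hb : ord 0 b b') :
    ord 0 (T (Fin.cons a 0) (Fin.cons b 0) 0) (T (Fin.cons a' 0) (Fin.cons b' 0) 0) :=
  hT.2 0 _ _ _ _ (fun j hj => absurd hj (Fin.not_lt_zero j)) ha hb

theorem TranslationEquivariant.cons_zero (hTE : TranslationEquivariant T) :
    TranslationEquivariant fun a b : B 0 => T (Fin.cons a 0) (Fin.cons b 0) 0 := fun a b c => by
  have h : ∀ x : B 0, (Fin.cons (x + c) 0 : ∀ i, B i) = Fin.cons x 0 + Fin.cons c 0 := fun x => by
    rw [← Fin.cons_add_cons', add_zero]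
  simp only
  rw [h, h, hTE]
  rfl

theorem TranslationEquivariant.tail (hTE : TranslationEquivariant T) (a b : B 0) :
    TranslationEquivariant fun q q' : ∀ i : Fin k, B i.succ =>
      Fin.tail (T (Fin.cons a q) (Fin.cons b q')) := fun q q' z => by
  have h : ∀ (x : B 0) (r : ∀ i : Fin k, B i.succ),
      (Fin.cons x (r + z) : ∀ i, B i) = Fin.cons x r + Fin.cons 0 z := fun x r => by
    rw [← Fin.cons_add_cons', add_zero]
  simp only
  rw [h, h, hTE]
  rfl

end Blocks

theorem hasEntropyCoupling_of_isKnotheMonotone {k : ℕ} {B : Fin k → Type*}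
    [∀ i, AddCommGroup (B i)] (ord : ∀ i, B i → B i → Prop)
    (hord : ∀ i, TotalAdditiveOrdering (ord i) ∧ ∃ u, IsMinimalPositive (ord i) u)
    {T : (∀ i, B i) → (∀ i, B i) → ∀ i, B i} (hTE : TranslationEquivariant T)
    (hT : IsKnotheMonotone ord T) (hS : IsKnotheMonotone ord fun x y => x + y - T x y)
    {μ ν : (∀ i, B i) → ℝ} (hμ : IsPMF μ) (hν : IsPMF ν) :
    HasEntropyCoupling T (fun x y => x + y - T x y) μ ν := by
  induction k with
  | zero => exact hasEntropyCoupling_of_unique _ _ hμ hν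
  | succ k ih =>
    obtain ⟨hord₀, u, hu⟩ := hord 0
    let := hord₀.linearOrder
    have := hord₀.isOrderedAddMonoid
    set E := Fin.consEquiv B
    refine HasEntropyCoupling.of_equiv E E E.symm E.symm <|
      hasEntropyCoupling_of_conditional (F₁ := fun a b => T (Fin.cons a 0) (Fin.cons b 0) 0)
        (G₁ := fun a b => a + b - T (Fin.cons a 0) (Fin.cons b 0) 0)
        (fun p q => hT.apply_cons_zero _ _ _ _)
        (fun p q => congrArg (p.1 + q.1 - ·) (hT.apply_cons_zero _ _ _ _))
        (hμ.comp_equiv E) (hν.comp_equiv E) ?_ fun a b ha hb => ?_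
    · exact hasEntropyCoupling_of_monotone hu hTE.cons_zero
        (fun _ _ h => hT.monotone_zero h.1 h.2) (fun _ _ h => hS.monotone_zero h.1 h.2)
        ((hμ.comp_equiv E).map _) ((hν.comp_equiv E).map _)
    · exact ih (fun i => ord i.succ) (fun i => hord i.succ) (hTE.tail a b) (hT.tail a b)
        (hS.tail a b) ((hμ.comp_equiv E).conditional ha) ((hν.comp_equiv E).conditional hb)

theorem add_mul_le_of_add_le {α β γ δ a b x y : ℝ} (hγδ : 0 ≤ min γ δ)
    (hmix : max α β ≤ min γ δ) (ha : a ≤ 0) (hb : b ≤ 0) (hx : x ≤ 0) (hy : y ≤ 0)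
    (h : x + y ≤ a + b) : γ * x + δ * y ≤ α * a + β * b := by
  nlinarith [mul_le_mul_of_nonpos_right (min_le_left γ δ) hx,
    mul_le_mul_of_nonpos_right (min_le_right γ δ) hy,
    mul_le_mul_of_nonpos_right ((le_max_left α β).trans hmix) ha,
    mul_le_mul_of_nonpos_right ((le_max_right α β).trans hmix) hb,
    mul_le_mul_of_nonneg_left h hγδ]

theorem hasEntropyCoupling_of_knothePair {n : ℕ} {Tm : (Fin n → ℤ) → (Fin n → ℤ) → (Fin n → ℤ)}
    (hTE : TranslationEquivariant Tm) (hpair : KnothePair Tm fun x y => x + y - Tm x y)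
    {μ ν : (Fin n → ℤ) → ℝ} (hμ : IsPMF μ) (hν : IsPMF ν) :
    HasEntropyCoupling Tm (fun x y => x + y - Tm x y) μ ν := by
  obtain ⟨k, -, ℓ, -, e, ord, hord, hT, hS⟩ := hpair
  set T := fun x y => e (Tm (e.symm x) (e.symm y))
  have hS' : (fun x y => e (e.symm x + e.symm y - Tm (e.symm x) (e.symm y))) =
      fun x y => x + y - T x y := by
    simp [T, map_sub, map_add]
  have hTE' : TranslationEquivariant T := fun x y z => by
    simp only [T, map_add]
    rw [hTE, map_add, e.apply_symm_apply]
  refine HasEntropyCoupling.of_equiv e.symm.toEquiv e.symm.toEquiv e.toEquiv e.toEquiv ?_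
  simp only [AddEquiv.toEquiv_eq_coe, EquivLike.coe_coe, hS']
  exact hasEntropyCoupling_of_isKnotheMonotone ord hord hTE' hT.isKnotheMonotone
    (hS' ▸ hS.isKnotheMonotone) (hμ.comp_equiv _) (hν.comp_equiv _)

theorem knothe_entropy_inequality_general {n : ℕ} (α β γ δ : ℝ)
    (hγ : 0 < γ) (hδ : 0 < δ)
    (hmix : max α β ≤ min γ δ)
    (Tm : (Fin n → ℤ) → (Fin n → ℤ) → (Fin n → ℤ))
    (hTE : TranslationEquivariant Tm)
    (hpair : KnothePair Tm (fun x y => x + y - Tm x y))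
    (μ ν : (Fin n → ℤ) → ℝ) (hμ : IsPMF μ) (hν : IsPMF ν) :
    ∃ π : (Fin n → ℤ) × (Fin n → ℤ) → ℝ, IsCoupling π μ ν ∧
      α * relEntropy μ + β * relEntropy ν ≥
        γ * relEntropy (pushforward (fun p => Tm p.1 p.2) π) +
        δ * relEntropy (pushforward (fun p => p.1 + p.2 - Tm p.1 p.2) π) := by
  obtain ⟨π, hπ, hH⟩ := hasEntropyCoupling_of_knothePair hTE hpair hμ hν
  exact ⟨π, hπ, add_mul_le_of_add_le (le_min hγ.le hδ.le) hmix (relEntropy_nonpos hμ)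
    (relEntropy_nonpos hν) (relEntropy_nonpos (hπ.1.map _)) (relEntropy_nonpos (hπ.1.map _)) hH⟩

/-- **Displacement convexity of entropy** for complementing Knothe-monotone operations on
`ℤⁿ`: there is a coupling `π` of `μ` and `ν` such that
`α H(μ|m) + β H(ν|m) ≥ γ H(κ₋|m) + δ H(κ₊|m)` where `κ± = π ∘ T±⁻¹`. -/
theorem knothe_entropy_inequality {n : ℕ} (α β γ δ : ℝ)
    (hα : 0 < α) (hβ : 0 < β) (hγ : 0 < γ) (hδ : 0 < δ)
    (hmix : max α β ≤ min γ δ)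
    (Tm : (Fin n → ℤ) → (Fin n → ℤ) → (Fin n → ℤ))
    (hTE : TranslationEquivariant Tm)
    (hpair : KnothePair Tm (fun x y => x + y - Tm x y))
    (μ ν : (Fin n → ℤ) → ℝ) (hμ : IsPMF μ) (hν : IsPMF ν) :
    ∃ π : (Fin n → ℤ) × (Fin n → ℤ) → ℝ, IsCoupling π μ ν ∧
      α * relEntropy μ + β * relEntropy ν ≥
        γ * relEntropy (pushforward (fun p => Tm p.1 p.2) π) +
        δ * relEntropy (pushforward (fun p => p.1 + p.2 - Tm p.1 p.2) π) :=
  knothe_entropy_inequality_general α β γ δ hγ hδ hmix Tm hTE hpair μ ν hμ hν
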